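/- Let τ := (7+√37)/8 and let Z be the real symmetric 3×3 matrix with rows ( 2(1+√37), −9, (9/4)(√37−1) ), ( −9, (9/8)(√37−1), (9/16)(√37−19) ), ( (9/4)(√37−1), (9/16)(√37−19), (9/4)(√37−1) ). Then Z is positive semidefinite; equivalently, for all real u and t, τ·(16u² + 9t² + 36u + 9t + 18) − 3·(4u² + 3t² + 6ut + 10u + 9t + 6) ≥ 6u + (9/4)t. -/

import Mathlib

open Matrix

/-- The matrix Z = τB − A − X of the paper, with τ = (7+√37)/8. -/
noncomputable def Zmat : Matrix (Fin 3) (Fin 3) ℝ :=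
  !![2 * (1 + Real.sqrt 37), -9, (9 / 4) * (Real.sqrt 37 - 1);
     -9, (9 / 8) * (Real.sqrt 37 - 1), (9 / 16) * (Real.sqrt 37 - 19);
     (9 / 4) * (Real.sqrt 37 - 1), (9 / 16) * (Real.sqrt 37 - 19),
       (9 / 4) * (Real.sqrt 37 - 1)]

/-! The quadratic form of `Zmat` is a sum of two squares with coefficients `(1 + √37)/128` and
`(9/16)(10 − √37)`, both positive; the inequality in `u, t` is that form evaluated at `(u, t, 1)`. -/

lemma Zmat_isHermitian : Zmat.IsHermitian := by
  ext i j
  fin_cases i <;> fin_cases j <;> simp [Zmat]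

lemma dotProduct_Zmat_mulVec (x : Fin 3 → ℝ) :
    x ⬝ᵥ Zmat *ᵥ x =
      (1 + √37) / 128 * (16 * x 0 + 2 * (1 - √37) * x 1 + (19 - √37) * x 2) ^ 2 +
        9 / 16 * (10 - √37) * x 2 ^ 2 := by
  have hs : √37 ^ 2 = 37 := Real.sq_sqrt (by norm_num)
  simp only [Zmat, dotProduct, mulVec, Fin.sum_univ_three, of_apply, cons_val', cons_val_zero,
    cons_val_one, cons_val_two, empty_val', cons_val_fin_one, head_cons, tail_cons,
    head_fin_const]
  linear_combination
    -(4 * (√37 - 1) * x 1 ^ 2 + (√37 - 37) * x 2 ^ 2 - 64 * x 0 * x 1 - 32 * x 0 * x 2 +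
      4 * (√37 - 19) * x 1 * x 2) / 128 * hs

lemma Zmat_posSemidef : Zmat.PosSemidef := by
  have hs : √37 < 10 := (Real.sqrt_lt' (by norm_num)).2 (by norm_num)
  refine .of_dotProduct_mulVec_nonneg Zmat_isHermitian fun x ↦ ?_
  rw [star_trivial, dotProduct_Zmat_mulVec]
  positivity

/-- Z is positive semidefinite; equivalently, with τ = (7+√37)/8, for all real u and t,
τ(16u² + 9t² + 36u + 9t + 18) − 3(4u² + 3t² + 6ut + 10u + 9t + 6) ≥ 6u + (9/4)t. -/
theorem stmt_17 :
    Zmat.PosSemidef ∧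
      ∀ u t : ℝ,
        6 * u + (9 / 4) * t ≤
          ((7 + Real.sqrt 37) / 8) * (16 * u ^ 2 + 9 * t ^ 2 + 36 * u + 9 * t + 18) -
            3 * (4 * u ^ 2 + 3 * t ^ 2 + 6 * u * t + 10 * u + 9 * t + 6) := by
  refine ⟨Zmat_posSemidef, fun u t ↦ ?_⟩
  have h := Zmat_posSemidef.dotProduct_mulVec_nonneg ![u, t, 1]
  simp only [star_trivial, Zmat, dotProduct, mulVec, Fin.sum_univ_three, of_apply, cons_val',
    cons_val_fin_one, cons_val_zero, cons_val_one, cons_val] at h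
  linarith
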